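/- Let X̃ be a smooth compact manifold with metric d and let Φ, Φ̂ ∈ Diff¹(X̃) be topologically conjugate by a homeomorphism g : X̃ → X̃, i.e. g ∘ Φ = Φ̂ ∘ g. Let (U, d_U) be a separable metric space, let h, ĥ : X̃ → U be continuous, and let d_{P,U} be a metric metrizing the weak topology on P(U). Let ξ be an ergodic Borel probability measure for Φ, let ξ₀ be a Borel probability measure absolutely continuous with respect to ξ, and suppose g⁻¹ is nonsingular with respect to ξ. Then limsup_{T→∞} d_{P,U}( (1/T) Σ_{t=0}^{T-1} h_*Φ^t_*ξ₀, (1/T) Σ_{t=0}^{T-1} ĥ_*Φ̂^t_*ξ₀ ) ≤ d_{P,U}(h_*ξ, ĥ_*ξ) + d_{P,U}(ĥ_*ξ, ĥ_*g_*ξ). -/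

import Mathlib

open MeasureTheory Filter Topology ENNReal

noncomputable section

/-- Pushforward of a probability measure under a measurable map. -/
def pushPM {α β : Type*} [MeasurableSpace α] [MeasurableSpace β]
    (f : α → β) (hf : Measurable f) (ν : ProbabilityMeasure α) : ProbabilityMeasure β :=
  ⟨(ν : Measure α).map f, Measure.isProbabilityMeasure_map hf.aemeasurable⟩

/-- Cesàro average `(1/(T+1)) ∑_{t=0}^{T} s t` of a sequence of probability measures. -/
def avgPM {α : Type*} [MeasurableSpace α] (s : ℕ → ProbabilityMeasure α) (T : ℕ) :
    ProbabilityMeasure α :=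
  ⟨((T + 1 : ℕ) : ℝ≥0∞)⁻¹ • ∑ t ∈ Finset.range (T + 1), (s t : Measure α), by
    constructor
    simp only [Measure.smul_apply, Measure.finsetSum_apply, measure_univ, Finset.sum_const,
      Finset.card_range, nsmul_eq_mul, mul_one, smul_eq_mul]
    rw [ENNReal.inv_mul_cancel] <;> simp⟩

/-- `ξ` is an invariant measure of `f` and every invariant Borel set has measure `0` or `1`. -/
def IsErgodicM {α : Type*} [MeasurableSpace α] (f : α → α) (μ : Measure α) : Prop :=
  μ.map f = μ ∧ ∀ A : Set α, MeasurableSet A → f ⁻¹' A = A → μ A = 0 ∨ μ A = 1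

/-!
Both Cesàro averages converge weakly. For an ergodic `μ` and any `ν ≪ μ`, the averages
`(1/N) ∑ ∫ f ∘ Φ^t dν` of a bounded observable tend to `∫ f dμ`: von Neumann's mean ergodic
theorem gives this against `L²` densities, and truncating `dν/dμ` reaches every `L¹` density.
The conjugacy makes `g_* ξ` ergodic for `Φ̂`, and the nonsingularity of `g⁻¹` gives
`ξ₀ ≪ ξ ≪ g_* ξ`, so the two averages tend to `h_* ξ` and `ĥ_* g_* ξ`. Hence the distance between
them converges to `d(h_* ξ, ĥ_* g_* ξ)`, and the triangle inequality through `ĥ_* ξ` bounds it.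
-/

def cesaroMean (a : ℕ → ℝ) (N : ℕ) : ℝ := (N : ℝ)⁻¹ * ∑ t ∈ Finset.range N, a t

lemma abs_cesaroMean_sub_cesaroMean_le {a b : ℕ → ℝ} {δ : ℝ} (h : ∀ t, |a t - b t| ≤ δ)
    (N : ℕ) : |cesaroMean a N - cesaroMean b N| ≤ δ := by
  have hδ : 0 ≤ δ := (abs_nonneg _).trans (h 0)
  rcases N.eq_zero_or_pos with rfl | hN
  · simpa [cesaroMean] using hδ
  have hsum : |∑ t ∈ Finset.range N, (a t - b t)| ≤ N * δ := by
    calc |∑ t ∈ Finset.range N, (a t - b t)| ≤ ∑ t ∈ Finset.range N, |a t - b t| :=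
          Finset.abs_sum_le_sum_abs _ _
      _ ≤ ∑ _t ∈ Finset.range N, δ := Finset.sum_le_sum fun t _ => h t
      _ = N * δ := by simp
  rw [cesaroMean, cesaroMean, ← mul_sub, ← Finset.sum_sub_distrib, abs_mul,
    abs_of_pos (by positivity), inv_mul_le_iff₀ (by positivity)]
  exact hsum

section Koopman

variable {α : Type*} [MeasurableSpace α] {μ : Measure α} {Φ : α → α}

def koopman (hΦ : MeasurePreserving Φ μ μ) : Lp ℝ 2 μ →L[ℝ] Lp ℝ 2 μ :=
  (Lp.compMeasurePreservingₗᵢ ℝ Φ hΦ).toContinuousLinearMap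

lemma norm_koopman_le (hΦ : MeasurePreserving Φ μ μ) : ‖koopman hΦ‖ ≤ 1 :=
  LinearIsometry.norm_toContinuousLinearMap_le _

lemma koopman_iterate_toLp_ae_eq (hΦ : MeasurePreserving Φ μ μ) {f : α → ℝ} (hf : MemLp f 2 μ)
    (t : ℕ) : ⇑((⇑(koopman hΦ))^[t] (hf.toLp f)) =ᵐ[μ] f ∘ Φ^[t] := by
  have : (⇑(koopman hΦ))^[t] = (Lp.compMeasurePreserving Φ hΦ)^[t] := rfl
  rw [this, Lp.compMeasurePreserving_iterate, Lp.toLp_compMeasurePreserving]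
  exact MemLp.coeFn_toLp _

lemma real_inner_eq_integral_mul_of_ae_eq {φ ψ : Lp ℝ 2 μ} {f w : α → ℝ} (hf : φ =ᵐ[μ] f)
    (hw : ψ =ᵐ[μ] w) : inner ℝ φ ψ = ∫ x, f x * w x ∂μ := by
  rw [L2.inner_def]
  refine integral_congr_ae ?_
  filter_upwards [hf, hw] with x hfx hwx
  simp [hfx, hwx, mul_comm]

variable [IsProbabilityMeasure μ]

lemma Ergodic.exists_eq_const_of_koopman_eq (herg : Ergodic Φ μ) {φ : Lp ℝ 2 μ}
    (hφ : koopman herg.toMeasurePreserving φ = φ) : ∃ c, φ = Lp.const 2 μ c := by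
  obtain ⟨c, hc⟩ := herg.eq_const_of_compMeasurePreserving_eq (g := φ.1) (congrArg Subtype.val hφ)
  exact ⟨c, Subtype.ext hc⟩

/-- The projection is a fixed point, hence a constant by ergodicity; as `φ` minus it is orthogonal
to the constant `1`, that constant is the mean of `φ`. -/
lemma Ergodic.starProjection_eqLocus_koopman (herg : Ergodic Φ μ) (φ : Lp ℝ 2 μ) :
    ((koopman herg.toMeasurePreserving).eqLocus (1 : Lp ℝ 2 μ →L[ℝ] Lp ℝ 2 μ)).starProjection φ
      = Lp.const 2 μ (∫ x, φ x ∂μ) := by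
  set K := (koopman herg.toMeasurePreserving).eqLocus (1 : Lp ℝ 2 μ →L[ℝ] Lp ℝ 2 μ)
  obtain ⟨c, hc⟩ := herg.exists_eq_const_of_koopman_eq (K.starProjection_apply_mem φ)
  have hone : Lp.const 2 μ (1 : ℝ) ∈ K := by
    show Lp.compMeasurePreserving Φ _ (MemLp.toLp _ (memLp_const 1)) = _
    rw [Lp.toLp_compMeasurePreserving]
    rfl
  have horth := K.starProjection_inner_eq_zero φ _ hone
  rw [inner_sub_left, sub_eq_zero, hc,
    real_inner_eq_integral_mul_of_ae_eq (Lp.coeFn_const 2 μ c) (Lp.coeFn_const 2 μ 1),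
    real_inner_eq_integral_mul_of_ae_eq (Filter.EventuallyEq.refl _ _) (Lp.coeFn_const 2 μ 1)]
    at horth
  simp only [Function.const_apply, mul_one, integral_const, probReal_univ, smul_eq_mul,
    one_mul] at horth
  rw [hc, horth]

lemma Ergodic.tendsto_birkhoffAverage_koopman (herg : Ergodic Φ μ) (φ : Lp ℝ 2 μ) :
    Tendsto (birkhoffAverage ℝ (koopman herg.toMeasurePreserving) _root_.id · φ) atTop
      (𝓝 (Lp.const 2 μ (∫ x, φ x ∂μ))) := by
  rw [← herg.starProjection_eqLocus_koopman]
  exact (koopman _).tendsto_birkhoffAverage_orthogonalProjection (norm_koopman_le _) φ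

theorem Ergodic.tendsto_cesaroMean_integral_comp_iterate_mul (herg : Ergodic Φ μ) {f w : α → ℝ}
    (hf : MemLp f 2 μ) (hw : MemLp w 2 μ) :
    Tendsto (cesaroMean fun t => ∫ x, f (Φ^[t] x) * w x ∂μ) atTop
      (𝓝 ((∫ x, f x ∂μ) * ∫ x, w x ∂μ)) := by
  have hlim := (herg.tendsto_birkhoffAverage_koopman (hf.toLp f)).inner (𝕜 := ℝ)
    (tendsto_const_nhds (x := hw.toLp w))
  have hconst : inner ℝ (Lp.const 2 μ (∫ x, hf.toLp f x ∂μ)) (hw.toLp w)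
      = (∫ x, f x ∂μ) * ∫ x, w x ∂μ := by
    rw [real_inner_eq_integral_mul_of_ae_eq (Lp.coeFn_const 2 μ _) hw.coeFn_toLp,
      integral_congr_ae hf.coeFn_toLp]
    exact integral_const_mul _ _
  have hmean : ∀ N, inner ℝ (birkhoffAverage ℝ (koopman herg.toMeasurePreserving) _root_.id N
      (hf.toLp f)) (hw.toLp w) = cesaroMean (fun t => ∫ x, f (Φ^[t] x) * w x ∂μ) N := by
    intro N
    rw [birkhoffAverage, birkhoffSum, inner_smul_left, sum_inner]
    simp_rw [_root_.id, real_inner_eq_integral_mul_of_ae_eq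
      (koopman_iterate_toLp_ae_eq _ hf _) hw.coeFn_toLp]
    simp [cesaroMean]
  rw [← hconst]
  exact hlim.congr hmean

end Koopman

section Cesaro
open ProbabilityTheory
variable {α : Type*} [MeasurableSpace α] {μ : Measure α} {Φ : α → α}

lemma abs_integral_mul_sub_integral_mul_le {g u v : α → ℝ} (hg : AEStronglyMeasurable g μ)
    {C : ℝ} (hC : ∀ x, ‖g x‖ ≤ C) (hu : Integrable u μ) (hv : Integrable v μ) :
    |∫ x, g x * u x ∂μ - ∫ x, g x * v x ∂μ| ≤ C * ∫ x, |u x - v x| ∂μ := by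
  rw [← integral_sub (hu.bdd_mul hg (ae_of_all _ hC)) (hv.bdd_mul hg (ae_of_all _ hC)),
    ← integral_const_mul]
  refine norm_integral_le_of_norm_le (G := ℝ) ((hu.sub hv).abs.const_mul C)
    (ae_of_all _ fun x => ?_)
  rw [← mul_sub, norm_mul, Real.norm_eq_abs (u x - v x)]
  exact mul_le_mul_of_nonneg_right (hC x) (abs_nonneg _)

lemma MeasureTheory.Integrable.tendsto_integral_abs_sub_truncation {w : α → ℝ}
    (hw : Integrable w μ) :
    Tendsto (fun A => ∫ x, |w x - truncation w A x| ∂μ) atTop (𝓝 0) := by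
  have := tendsto_integral_filter_of_dominated_convergence (fun x => 2 * |w x|)
    (F := fun A x => |w x - truncation w A x|) (f := 0)
    (Eventually.of_forall fun A => (hw.1.sub hw.1.truncation).norm)
    (Eventually.of_forall fun A => ae_of_all _ fun x => by
      rw [Real.norm_eq_abs, abs_abs, two_mul]
      exact (abs_sub _ _).trans (add_le_add_right (abs_truncation_le_abs_self _ _ _) _))
    (hw.abs.const_mul 2)
    (ae_of_all _ fun x => tendsto_const_nhds.congr' <| by
      filter_upwards [Ioi_mem_atTop |w x|] with A hA
      simp [truncation_eq_self hA])
  simpa using this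

variable [IsProbabilityMeasure μ]

theorem Ergodic.tendsto_cesaroMean_integral_comp_iterate_mul_of_integrable (herg : Ergodic Φ μ)
    {f w : α → ℝ} (hf : Measurable f) {C : ℝ} (hC : ∀ x, ‖f x‖ ≤ C) (hw : Integrable w μ) :
    Tendsto (cesaroMean fun t => ∫ x, f (Φ^[t] x) * w x ∂μ) atTop
      (𝓝 ((∫ x, f x ∂μ) * ∫ x, w x ∂μ)) := by
  -- the truncations of `w` lie in `L²` and approximate `w` in `L¹`, uniformly in the time `N`
  have hf2 : MemLp f 2 μ := MemLp.of_bound hf.aestronglyMeasurable C (ae_of_all _ hC)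
  refine TendstoUniformly.tendsto_of_eventually_tendsto (p := atTop)
    (F := fun A => cesaroMean fun t => ∫ x, f (Φ^[t] x) * truncation w A x ∂μ) ?_
    (Eventually.of_forall fun A =>
      herg.tendsto_cesaroMean_integral_comp_iterate_mul hf2 hw.1.memLp_truncation)
    (tendsto_const_nhds.mul (tendsto_integral_truncation hw))
  rw [Metric.tendstoUniformly_iff]
  intro ε hε
  have hsmall := (hw.tendsto_integral_abs_sub_truncation.const_mul C).eventually
    (gt_mem_nhds (by simpa using hε))
  filter_upwards [hsmall] with A hA N
  refine (abs_cesaroMean_sub_cesaroMean_le (fun t => ?_) N).trans_lt hA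
  exact abs_integral_mul_sub_integral_mul_le
    (hf.comp (herg.measurable.iterate t)).aestronglyMeasurable (fun x => hC _) hw
    hw.1.integrable_truncation

theorem Ergodic.tendsto_cesaroMean_integral_comp_iterate_of_absolutelyContinuous
    (herg : Ergodic Φ μ) {ν : Measure α} [IsProbabilityMeasure ν] (hν : ν ≪ μ) {f : α → ℝ}
    (hf : Measurable f) {C : ℝ} (hC : ∀ x, ‖f x‖ ≤ C) :
    Tendsto (cesaroMean fun t => ∫ x, f (Φ^[t] x) ∂ν) atTop (𝓝 (∫ x, f x ∂μ)) := by
  have hdensity : ∀ t, ∫ x, f (Φ^[t] x) ∂ν = ∫ x, f (Φ^[t] x) * (ν.rnDeriv μ x).toReal ∂μ := by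
    intro t
    rw [← integral_rnDeriv_smul hν]
    simp only [smul_eq_mul, mul_comm]
  simpa [hdensity, Measure.integral_toReal_rnDeriv hν] using
    herg.tendsto_cesaroMean_integral_comp_iterate_mul_of_integrable hf hC
      (Measure.integrable_toReal_rnDeriv (μ := ν) (ν := μ))

end Cesaro

lemma IsErgodicM.ergodic {α : Type*} [MeasurableSpace α] {f : α → α} {μ : Measure α}
    [IsProbabilityMeasure μ] (h : IsErgodicM f μ) (hf : Measurable f) : Ergodic f μ := by
  refine ⟨⟨hf, h.1⟩, ⟨fun s hs hfs => ?_⟩⟩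
  rw [Filter.eventuallyConst_set']
  rcases h.2 s hs hfs with h0 | h1
  · exact Or.inl (ae_eq_empty.mpr h0)
  · refine Or.inr (ae_eq_univ.mpr ?_)
    rw [measure_compl hs (measure_ne_top μ s), h1, measure_univ, tsub_self]

lemma MeasureTheory.Measure.absolutelyContinuous_map_of_rightInverse {α : Type*}
    [MeasurableSpace α] {μ : Measure α} {f g : α → α} (hf : Measurable f) (hg : Measurable g)
    (hfg : Function.RightInverse g f) (h : μ.map g ≪ μ) : μ ≪ μ.map f := by
  calc μ = (μ.map g).map f := by rw [Measure.map_map hf hg, hfg.comp_eq_id, Measure.map_id]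
    _ ≪ μ.map f := h.map hf

section Weak
variable {α : Type*} [MeasurableSpace α]

lemma integral_pushPM {β : Type*} [MeasurableSpace β] {h : α → β} (hh : Measurable h)
    (ν : ProbabilityMeasure α) {F : β → ℝ} (hF : Measurable F) :
    ∫ y, F y ∂(pushPM h hh ν : Measure β) = ∫ x, F (h x) ∂(ν : Measure α) :=
  integral_map hh.aemeasurable hF.aestronglyMeasurable

lemma integral_avgPM {β : Type*} [MeasurableSpace β] (s : ℕ → ProbabilityMeasure β) (T : ℕ)
    {F : β → ℝ} (hF : ∀ t, Integrable F (s t)) :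
    ∫ y, F y ∂(avgPM s T : Measure β)
      = cesaroMean (fun t => ∫ y, F y ∂(s t : Measure β)) (T + 1) := by
  show ∫ y, F y ∂(((T + 1 : ℕ) : ℝ≥0∞)⁻¹ • ∑ t ∈ Finset.range (T + 1), (s t : Measure β)) = _
  rw [integral_smul_measure, integral_finsetSum_measure fun t _ => hF t, ENNReal.toReal_inv,
    ENNReal.toReal_natCast, smul_eq_mul, cesaroMean]

variable {U : Type*} [TopologicalSpace U] [MeasurableSpace U] [OpensMeasurableSpace U]

theorem tendsto_avgPM_pushPM_iterate {μ ν : ProbabilityMeasure α} {Φ : α → α}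
    (herg : Ergodic Φ μ) (hν : (ν : Measure α) ≪ μ) {h : α → U} (hh : Measurable h) :
    Tendsto (avgPM fun t => pushPM h hh (pushPM Φ^[t] (herg.measurable.iterate t) ν)) atTop
      (𝓝 (pushPM h hh μ)) := by
  rw [ProbabilityMeasure.tendsto_iff_forall_integral_tendsto]
  intro F
  have hF : Measurable F := F.continuous.measurable
  have hterm : ∀ t,
      ∫ u, F u ∂(pushPM h hh (pushPM Φ^[t] (herg.measurable.iterate t) ν) : Measure U)
        = ∫ x, F (h (Φ^[t] x)) ∂(ν : Measure α) := fun t => by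
    rw [integral_pushPM _ _ hF, integral_pushPM _ _ (hF.comp hh) (F := fun x => F (h x))]
  simp_rw [integral_avgPM _ _ fun t => F.integrable _, hterm, integral_pushPM hh _ hF]
  exact (herg.tendsto_cesaroMean_integral_comp_iterate_of_absolutelyContinuous hν (hF.comp hh)
    fun x => F.norm_coe_le_norm (h x)).comp (tendsto_add_atTop_nat 1)

end Weak

section OpenBallMetric
variable {X : Type*} {d : X → X → ℝ}
  (hsymm : ∀ a b, d a b = d b a) (htri : ∀ a b c, d a c ≤ d a b + d b c) (hself : ∀ a, d a a = 0)
include hsymm htri hself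

lemma nonneg_of_symm_of_triangle (a b : X) : 0 ≤ d a b := by
  linarith [htri a b a, hsymm a b, hself a]

variable [TopologicalSpace X]

lemma tendsto_dist_zero_of_tendsto
    (hopen : ∀ s : Set X, (∀ a ∈ s, ∃ ε > 0, ∀ b, d a b < ε → b ∈ s) → IsOpen s)
    {ι : Type*} {l : Filter ι} {a : X} {s : ι → X} (hs : Tendsto s l (𝓝 a)) :
    Tendsto (fun i => d a (s i)) l (𝓝 0) := by
  refine tendsto_order.2 ⟨fun ε hε => Eventually.of_forall fun i =>
    hε.trans_le (nonneg_of_symm_of_triangle hsymm htri hself a (s i)), fun ε hε => ?_⟩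
  have hball : IsOpen {b | d a b < ε} := hopen _ fun b hb =>
    ⟨ε - d a b, sub_pos.2 hb, fun c hc => show d a c < ε by linarith [htri a b c]⟩
  exact hs.eventually (hball.mem_nhds (by simpa [hself a] using hε))

lemma tendsto_dist_of_tendsto
    (hopen : ∀ s : Set X, (∀ a ∈ s, ∃ ε > 0, ∀ b, d a b < ε → b ∈ s) → IsOpen s)
    {ι : Type*} {l : Filter ι} {a b : X} {s r : ι → X} (hs : Tendsto s l (𝓝 a))
    (hr : Tendsto r l (𝓝 b)) : Tendsto (fun i => d (s i) (r i)) l (𝓝 (d a b)) := by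
  have hbound := (tendsto_dist_zero_of_tendsto hsymm htri hself hopen hs).add
    (tendsto_dist_zero_of_tendsto hsymm htri hself hopen hr)
  rw [add_zero] at hbound
  rw [tendsto_iff_norm_sub_tendsto_zero]
  refine squeeze_zero (fun _ => norm_nonneg _) (fun i => ?_) hbound
  rw [Real.norm_eq_abs, abs_le]
  constructor
  · linarith [htri a (s i) b, htri (s i) (r i) b, hsymm (r i) b]
  · linarith [htri (s i) a (r i), htri a b (r i), hsymm (s i) a]

end OpenBallMetric

theorem statement9_general
    {Xt : Type*} [MetricSpace Xt] [MeasurableSpace Xt] [BorelSpace Xt]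
    {U : Type*} [MetricSpace U]
    [MeasurableSpace U] [BorelSpace U]
    -- `Φ, Φ̂ ∈ Diff¹(X̃)`, conjugate by the homeomorphism `g`:
    (Φ Φh g : Xt ≃ₜ Xt)
    (hconj : ∀ x, g (Φ x) = Φh (g x))
    -- continuous readouts:
    (h hh : Xt → U) (hhc : Continuous h) (hhhc : Continuous hh)
    -- `dPU` is a metric on `P(U)` metrizing the weak topology:
    (dPU : ProbabilityMeasure U → ProbabilityMeasure U → ℝ)
    (hdP_symm : ∀ a b, dPU a b = dPU b a)
    (hdP_tri : ∀ a b c, dPU a c ≤ dPU a b + dPU b c)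
    (hdP_eq : ∀ a b, dPU a b = 0 ↔ a = b)
    (hdP_top : ∀ s : Set (ProbabilityMeasure U),
      IsOpen s ↔ ∀ a ∈ s, ∃ ε > (0 : ℝ), ∀ b, dPU a b < ε → b ∈ s)
    -- `ξ` ergodic for `Φ`, `ξ₀ ≪ ξ`, `g⁻¹` nonsingular w.r.t. `ξ`:
    (ξ ξ₀ : ProbabilityMeasure Xt)
    (herg : IsErgodicM ⇑Φ (ξ : Measure Xt))
    (habs : (ξ₀ : Measure Xt) ≪ (ξ : Measure Xt))
    (hns : (ξ : Measure Xt).map ⇑g.symm ≪ (ξ : Measure Xt)) :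
    Filter.limsup
      (fun T : ℕ => dPU
        (avgPM (fun t => pushPM h hhc.measurable
          (pushPM (⇑Φ)^[t] (Φ.continuous.measurable.iterate t) ξ₀)) T)
        (avgPM (fun t => pushPM hh hhhc.measurable
          (pushPM (⇑Φh)^[t] (Φh.continuous.measurable.iterate t) ξ₀)) T))
      atTop
      ≤ dPU (pushPM h hhc.measurable ξ) (pushPM hh hhhc.measurable ξ) +
        dPU (pushPM hh hhhc.measurable ξ)
          (pushPM hh hhhc.measurable (pushPM ⇑g g.continuous.measurable ξ)) := by
  have hergΦ : Ergodic Φ (ξ : Measure Xt) := herg.ergodic Φ.continuous.measurable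
  have hergΦh : Ergodic Φh (pushPM g g.continuous.measurable ξ : Measure Xt) :=
    MeasurePreserving.ergodic_of_ergodic_semiconj ⟨g.continuous.measurable, rfl⟩ hergΦ
      Φh.continuous.measurable hconj
  have hξ_ac : (ξ : Measure Xt) ≪ (pushPM g g.continuous.measurable ξ : Measure Xt) :=
    Measure.absolutelyContinuous_map_of_rightInverse g.continuous.measurable
      g.symm.continuous.measurable g.apply_symm_apply hns
  have hlim := tendsto_dist_of_tendsto hdP_symm hdP_tri (fun a => (hdP_eq a a).2 rfl)
    (fun s => (hdP_top s).2) (tendsto_avgPM_pushPM_iterate hergΦ habs hhc.measurable)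
    (tendsto_avgPM_pushPM_iterate hergΦh (habs.trans hξ_ac) hhhc.measurable)
  rw [hlim.limsup_eq]
  exact hdP_tri _ _ _

/-- Cesàro density-forecast bound in the observation space for an ergodic
measure `ξ` of the state-space dynamics `Φ`, with conjugate proxy dynamics `Φ̂` and readouts
`h, ĥ`. -/
theorem statement9 {E : Type*} [NormedAddCommGroup E] [NormedSpace ℝ E]
    {H : Type*} [TopologicalSpace H] (I : ModelWithCorners ℝ E H)
    {Xt : Type*} [MetricSpace Xt] [CompactSpace Xt] [ChartedSpace H Xt]
    [IsManifold I (⊤ : ℕ∞) Xt] [MeasurableSpace Xt] [BorelSpace Xt]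
    {U : Type*} [MetricSpace U] [TopologicalSpace.SeparableSpace U]
    [MeasurableSpace U] [BorelSpace U]
    -- `Φ, Φ̂ ∈ Diff¹(X̃)`, conjugate by the homeomorphism `g`:
    (Φ Φh g : Xt ≃ₜ Xt)
    (hΦ : ContMDiff I I 1 ⇑Φ) (hΦinv : ContMDiff I I 1 ⇑Φ.symm)
    (hΦh : ContMDiff I I 1 ⇑Φh) (hΦhinv : ContMDiff I I 1 ⇑Φh.symm)
    (hconj : ∀ x, g (Φ x) = Φh (g x))
    -- continuous readouts:
    (h hh : Xt → U) (hhc : Continuous h) (hhhc : Continuous hh)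
    -- `dPU` is a metric on `P(U)` metrizing the weak topology:
    (dPU : ProbabilityMeasure U → ProbabilityMeasure U → ℝ)
    (hdP_symm : ∀ a b, dPU a b = dPU b a)
    (hdP_tri : ∀ a b c, dPU a c ≤ dPU a b + dPU b c)
    (hdP_eq : ∀ a b, dPU a b = 0 ↔ a = b)
    (hdP_top : ∀ s : Set (ProbabilityMeasure U),
      IsOpen s ↔ ∀ a ∈ s, ∃ ε > (0 : ℝ), ∀ b, dPU a b < ε → b ∈ s)
    -- `ξ` ergodic for `Φ`, `ξ₀ ≪ ξ`, `g⁻¹` nonsingular w.r.t. `ξ`: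
    (ξ ξ₀ : ProbabilityMeasure Xt)
    (herg : IsErgodicM ⇑Φ (ξ : Measure Xt))
    (habs : (ξ₀ : Measure Xt) ≪ (ξ : Measure Xt))
    (hns : (ξ : Measure Xt).map ⇑g.symm ≪ (ξ : Measure Xt)) :
    Filter.limsup
      (fun T : ℕ => dPU
        (avgPM (fun t => pushPM h hhc.measurable
          (pushPM (⇑Φ)^[t] (Φ.continuous.measurable.iterate t) ξ₀)) T)
        (avgPM (fun t => pushPM hh hhhc.measurable
          (pushPM (⇑Φh)^[t] (Φh.continuous.measurable.iterate t) ξ₀)) T))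
      atTop
      ≤ dPU (pushPM h hhc.measurable ξ) (pushPM hh hhhc.measurable ξ) +
        dPU (pushPM hh hhhc.measurable ξ)
          (pushPM hh hhhc.measurable (pushPM ⇑g g.continuous.measurable ξ)) :=
  statement9_general Φ Φh g hconj h hh hhc hhhc dPU hdP_symm hdP_tri hdP_eq hdP_top ξ ξ₀ herg habs
    hns

end
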